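/- The q-Euler-Cassini formula: for all n ≥ 0 and k ≥ 1, f(k-1,x,qs) f(n+k,x,s) - f(k,x,s) f(n+k-1,x,qs) = (-1)^k q^{C(k,2)} s^{k-1} f(n,x,q^k s), where C(k,2) = k(k-1)/2. -/
import Mathlib


/-- Carlitz q-Fibonacci polynomials. -/
def qFib (q x s : ℝ) : ℕ → ℝ
  | 0 => 0
  | 1 => 1
  | (n+2) => x * qFib q x s (n+1) + q^n * s * qFib q x s n

lemma qFib_base1 (q x s : ℝ) (m : ℕ) :
    qFib q x (q*s) m * qFib q x s (m+2) - qFib q x s (m+1) * qFib q x (q*s) (m+1)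
      = (-1)^(m+1) * q^((m+1).choose 2) * s^m := by
  induction m with
  | zero => simp [qFib]
  | succ m ih =>
      have h2 : (m+2).choose 2 = (m+1) + (m+1).choose 2 := by
        rw [Nat.choose_succ_succ (m+1) 1, Nat.choose_one_right]
      have e1 : qFib q x s (m+3) = x * qFib q x s (m+2) + q^(m+1) * s * qFib q x s (m+1) := rfl
      have e2 : qFib q x (q*s) (m+2)
          = x * qFib q x (q*s) (m+1) + q^m * (q*s) * qFib q x (q*s) m := rfl
      have h3 : m+1+2 = m+3 := rfl
      rw [h3, e1, e2, h2, pow_add]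
      linear_combination (-(q^(m+1)) * s) * ih

lemma qFib_aux (q x s : ℝ) (m : ℕ) (n : ℕ) :
    qFib q x (q*s) m * qFib q x s (n+m+1) - qFib q x s (m+1) * qFib q x (q*s) (n+m)
      = (-1)^(m+1) * q^((m+1).choose 2) * s^m * qFib q x (q^(m+1)*s) n := by
  induction n using Nat.twoStepInduction with
  | zero => simp [qFib, Nat.zero_add]; ring
  | one =>
      have h1 : 1+m+1 = m+2 := by omega
      have h2 : 1+m = m+1 := by omega
      rw [h1, h2]
      simpa [qFib] using qFib_base1 q x s m
  | more n ih ih1 =>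
      have h1 : n+2+m+1 = n+m+1+2 := by omega
      have h2 : n+2+m = n+m+2 := by omega
      rw [h1, h2]
      have e1 : qFib q x s (n+m+1+2)
          = x * qFib q x s (n+m+2) + q^(n+m+1) * s * qFib q x s (n+m+1) := rfl
      have e2 : qFib q x (q*s) (n+m+2)
          = x * qFib q x (q*s) (n+m+1) + q^(n+m) * (q*s) * qFib q x (q*s) (n+m) := rfl
      have e3 : qFib q x (q^(m+1)*s) (n+2)
          = x * qFib q x (q^(m+1)*s) (n+1) + q^n * (q^(m+1)*s) * qFib q x (q^(m+1)*s) n := rfl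
      have h3 : n+1+m+1 = n+m+2 := by omega
      have h4 : n+1+m = n+m+1 := by omega
      rw [h3, h4] at ih1
      rw [e1, e2, e3]
      linear_combination x * ih1 + q^(n+m+1) * s * ih

theorem qEulerCassini (q x s : ℝ) (n k : ℕ) (hk : 1 ≤ k) :
    qFib q x (q*s) (k-1) * qFib q x s (n+k) - qFib q x s k * qFib q x (q*s) (n+k-1)
      = (-1)^k * q^(k.choose 2) * s^(k-1) * qFib q x (q^k*s) n := by
  obtain ⟨m, rfl⟩ : ∃ m, k = m + 1 := ⟨k - 1, by omega⟩
  have h1 : m + 1 - 1 = m := rfl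
  have h2 : n + (m+1) = n + m + 1 := rfl
  have h3 : n + (m+1) - 1 = n + m := rfl
  rw [h1, h3, h2]
  exact qFib_aux q x s m n
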